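/- arXiv:1912.01906 — 6 statements merged into one kernel-verified Lean document; each statement's English description precedes it below -/
import Mathlib

section
/- If R is a sub-stochastic matrix (nonnegative entries, row sums ≤ 1) and x ≤ y componentwise with xᵢ = yᵢ for some index i, then fᵢ(x) ≤ fᵢ(y), where f(x) = S₀ʷ(R'x + c) − x. (This is the Kamke condition for monotonicity of the flow network dynamics.) -/
open Matrix Finset

/-- Kamke condition: if x ≤ y componentwise and xᵢ = yᵢ, then fᵢ(x) ≤ fᵢ(y),
where f(x) = S₀ʷ(R'x + c) − x and R is sub-stochastic. -/
theorem stmt3 {n : ℕ} (w c : Fin n → ℝ) (hw : ∀ i, 0 ≤ w i)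
    (R : Matrix (Fin n) (Fin n) ℝ) (hR : ∀ i j, 0 ≤ R i j)
    (hrow : ∀ i, ∑ j, R i j ≤ 1)
    (x y : Fin n → ℝ) (hxy : ∀ j, x j ≤ y j) (i : Fin n) (hi : x i = y i) :
    max 0 (min ((Rᵀ.mulVec x) i + c i) (w i)) - x i ≤
    max 0 (min ((Rᵀ.mulVec y) i + c i) (w i)) - y i := by
  rw [hi]
  have hmv : (Rᵀ.mulVec x) i ≤ (Rᵀ.mulVec y) i := by
    simp only [Matrix.mulVec, dotProduct, Matrix.transpose_apply]
    exact Finset.sum_le_sum fun j _ => mul_le_mul_of_nonneg_left (hxy j) (hR j i)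
  gcongr
end

section
/- The set of fixed points X(c) = {x ∈ L₀ʷ : x = S₀ʷ(R'x + c)} is a closed subset of the compact lattice L₀ʷ, and if R is sub-stochastic and x, y ∈ X(c), then the componentwise maximum max(x,y) and componentwise minimum min(x,y) satisfy: T(max(x,y)) ≥ max(x,y) and T(min(x,y)) ≤ min(x,y) where T(z) = S₀ʷ(R'z + c). -/
open Matrix Finset

open Function

theorem Matrix.mulVec_monotone_of_nonneg {m n α : Type*} [Fintype n] [Semiring α]
    [PartialOrder α] [IsOrderedRing α] {A : Matrix m n α} (hA : ∀ i j, 0 ≤ A i j) :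
    Monotone (A *ᵥ ·) :=
  fun _ _ h i => dotProduct_le_dotProduct_of_nonneg_left h (hA i)

theorem Monotone.sup_le_map_sup_of_isFixedPt {α : Type*} [SemilatticeSup α] {f : α → α}
    (hf : Monotone f) {x y : α} (hx : IsFixedPt f x) (hy : IsFixedPt f y) :
    x ⊔ y ≤ f (x ⊔ y) :=
  calc x ⊔ y = f x ⊔ f y := by rw [hx.eq, hy.eq]
    _ ≤ f (x ⊔ y) := hf.le_map_sup x y

theorem Monotone.map_inf_le_inf_of_isFixedPt {α : Type*} [SemilatticeInf α] {f : α → α}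
    (hf : Monotone f) {x y : α} (hx : IsFixedPt f x) (hy : IsFixedPt f y) :
    f (x ⊓ y) ≤ x ⊓ y :=
  calc f (x ⊓ y) ≤ f x ⊓ f y := hf.map_inf_le x y
    _ = x ⊓ y := by rw [hx.eq, hy.eq]

section TruncatedAffineMap

variable {ι : Type*} [Fintype ι]

/-- The paper's `T(x) = S₀ʷ(A x + c)`, an affine map clipped coordinatewise to `[0, w]`. -/
def truncatedAffineMap (A : Matrix ι ι ℝ) (c w : ι → ℝ) (x : ι → ℝ) : ι → ℝ :=
  fun i => max 0 (min ((A *ᵥ x) i + c i) (w i))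

theorem continuous_truncatedAffineMap (A : Matrix ι ι ℝ) (c w : ι → ℝ) :
    Continuous (truncatedAffineMap A c w) := by
  unfold truncatedAffineMap
  fun_prop

theorem monotone_truncatedAffineMap {A : Matrix ι ι ℝ} (hA : ∀ i j, 0 ≤ A i j) (c w : ι → ℝ) :
    Monotone (truncatedAffineMap A c w) := fun _ _ h i =>
  max_le_max le_rfl <| min_le_min (add_le_add_left (mulVec_monotone_of_nonneg hA h i) _) le_rfl

theorem isClosed_Icc_inter_fixedPoints_truncatedAffineMap (A : Matrix ι ι ℝ) (c w : ι → ℝ) :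
    IsClosed (Set.Icc 0 w ∩ fixedPoints (truncatedAffineMap A c w)) :=
  isClosed_Icc.inter (isClosed_fixedPoints (continuous_truncatedAffineMap A c w))

theorem isFixedPt_truncatedAffineMap_iff {A : Matrix ι ι ℝ} {c w x : ι → ℝ} :
    IsFixedPt (truncatedAffineMap A c w) x ↔
      ∀ i, x i = max 0 (min ((A *ᵥ x) i + c i) (w i)) := by
  simp only [IsFixedPt, funext_iff, truncatedAffineMap, eq_comm]

end TruncatedAffineMap

theorem stmt7_general {n : ℕ} (w c : Fin n → ℝ)
    (R : Matrix (Fin n) (Fin n) ℝ) (hR : ∀ i j, 0 ≤ R i j) :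
    IsClosed {x : Fin n → ℝ | (∀ i, 0 ≤ x i ∧ x i ≤ w i) ∧
      ∀ i, x i = max 0 (min ((Rᵀ.mulVec x) i + c i) (w i))} ∧
    ∀ x y : Fin n → ℝ,
      ((∀ i, 0 ≤ x i ∧ x i ≤ w i) ∧
        ∀ i, x i = max 0 (min ((Rᵀ.mulVec x) i + c i) (w i))) →
      ((∀ i, 0 ≤ y i ∧ y i ≤ w i) ∧
        ∀ i, y i = max 0 (min ((Rᵀ.mulVec y) i + c i) (w i))) →
      (∀ i, max (x i) (y i) ≤
        max 0 (min ((Rᵀ.mulVec (fun j => max (x j) (y j))) i + c i) (w i))) ∧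
      (∀ i, max 0 (min ((Rᵀ.mulVec (fun j => min (x j) (y j))) i + c i) (w i)) ≤
        min (x i) (y i)) := by
  have hT := monotone_truncatedAffineMap (A := Rᵀ) (fun i j => hR j i) c w
  refine ⟨?_, fun x y ⟨_, hx⟩ ⟨_, hy⟩ => ?_⟩
  · convert isClosed_Icc_inter_fixedPoints_truncatedAffineMap Rᵀ c w using 1
    ext x
    simp only [Set.mem_ofPred_eq, Set.mem_inter_iff, Set.mem_Icc, mem_fixedPoints,
      isFixedPt_truncatedAffineMap_iff, Pi.le_def, Pi.zero_apply, forall_and]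
  · rw [← isFixedPt_truncatedAffineMap_iff] at hx hy
    exact ⟨hT.sup_le_map_sup_of_isFixedPt hx hy, hT.map_inf_le_inf_of_isFixedPt hx hy⟩

/-- The set of fixed points is closed, and for a sub-stochastic R the
componentwise max/min of two fixed points satisfy T(max) ≥ max and
T(min) ≤ min. -/
theorem stmt7 {n : ℕ} (w c : Fin n → ℝ) (hw : ∀ i, 0 ≤ w i)
    (R : Matrix (Fin n) (Fin n) ℝ) (hR : ∀ i j, 0 ≤ R i j)
    (hrow : ∀ i, ∑ j, R i j ≤ 1) :
    IsClosed {x : Fin n → ℝ | (∀ i, 0 ≤ x i ∧ x i ≤ w i) ∧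
      ∀ i, x i = max 0 (min ((Rᵀ.mulVec x) i + c i) (w i))} ∧
    ∀ x y : Fin n → ℝ,
      ((∀ i, 0 ≤ x i ∧ x i ≤ w i) ∧
        ∀ i, x i = max 0 (min ((Rᵀ.mulVec x) i + c i) (w i))) →
      ((∀ i, 0 ≤ y i ∧ y i ≤ w i) ∧
        ∀ i, y i = max 0 (min ((Rᵀ.mulVec y) i + c i) (w i))) →
      (∀ i, max (x i) (y i) ≤
        max 0 (min ((Rᵀ.mulVec (fun j => max (x j) (y j))) i + c i) (w i))) ∧
      (∀ i, max 0 (min ((Rᵀ.mulVec (fun j => min (x j) (y j))) i + c i) (w i)) ≤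
        min (x i) (y i)) :=
  stmt7_general w c R hR
end

section
/- If R is stochastic and irreducible, then for any two equilibria x, y of ẋ = S₀ʷ(R'x + c) − x with x ≤ y and x ≠ y, the strict inequality xᵢ < yᵢ holds for every coordinate i. (Equivalently: the set S = {i : xᵢ < yᵢ} cannot be a nonempty proper subset of {1,…,n}.) -/
open Matrix Finset

/-- If R is stochastic and irreducible, two ordered distinct equilibria of
ẋ = S₀ʷ(R'x + c) − x are strictly ordered in every coordinate. -/
theorem stmt9 {n : ℕ} (w c : Fin n → ℝ) (hw : ∀ i, 0 < w i)
    (R : Matrix (Fin n) (Fin n) ℝ) (hR : ∀ i j, 0 ≤ R i j)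
    (hrow : ∀ i, ∑ j, R i j = 1)
    (hirr : ∀ S : Finset (Fin n), S.Nonempty → S ≠ Finset.univ →
      ∃ i ∈ S, ∑ j ∈ S, R i j < 1)
    (x y : Fin n → ℝ)
    (hxL : ∀ i, 0 ≤ x i ∧ x i ≤ w i) (hyL : ∀ i, 0 ≤ y i ∧ y i ≤ w i)
    (hxfix : ∀ i, x i = max 0 (min ((Rᵀ.mulVec x) i + c i) (w i)))
    (hyfix : ∀ i, y i = max 0 (min ((Rᵀ.mulVec y) i + c i) (w i)))
    (hxy : ∀ i, x i ≤ y i) (hne : x ≠ y) :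
    ∀ i, x i < y i := by
  classical
  by_contra hcon
  push_neg at hcon
  obtain ⟨i0, hi0⟩ := hcon
  set S : Finset (Fin n) := Finset.univ.filter (fun i => x i < y i) with hSdef
  have hmemS : ∀ i, i ∈ S ↔ x i < y i := by intro i; simp [hSdef]
  have hSne : S.Nonempty := by
    obtain ⟨j, hj⟩ := Function.ne_iff.mp hne
    exact ⟨j, (hmemS j).mpr (lt_of_le_of_ne (hxy j) hj)⟩
  have hSnU : S ≠ Finset.univ := by
    intro h
    exact absurd ((hmemS i0).mp (h ▸ Finset.mem_univ i0)) (not_lt.mpr hi0)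
  obtain ⟨j0, hj0S, hj0⟩ := hirr S hSne hSnU
  have hz0 : ∀ j, j ∉ S → y j - x j = 0 := by
    intro j hj
    have h1 : ¬ x j < y j := fun h => hj ((hmemS j).mpr h)
    have := le_antisymm (hxy j) (not_lt.mp h1)
    linarith
  have hmv : ∀ (v : Fin n → ℝ) i, (Rᵀ.mulVec v) i = ∑ j, R j i * v j := by
    intro v i; simp [Matrix.mulVec, dotProduct, Matrix.transpose_apply]
  have key : ∀ i, y i - x i ≤ ∑ j, R j i * (y j - x j) := by
    intro i
    have hab : (Rᵀ.mulVec x) i ≤ (Rᵀ.mulVec y) i := by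
      rw [hmv, hmv]
      exact Finset.sum_le_sum fun j _ => mul_le_mul_of_nonneg_left (hxy j) (hR j i)
    have hdiff : y i - x i ≤ ((Rᵀ.mulVec y) i + c i) - ((Rᵀ.mulVec x) i + c i) := by
      rw [hxfix i, hyfix i]
      simp only [max_def, min_def]
      split_ifs <;> linarith
    have : ((Rᵀ.mulVec y) i + c i) - ((Rᵀ.mulVec x) i + c i)
        = ∑ j, R j i * (y j - x j) := by
      rw [hmv, hmv]
      simp only [mul_sub]
      rw [Finset.sum_sub_distrib]
      ring
    linarith [hdiff, this.le, this.ge]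
  -- sum over S
  have hsum : ∑ i ∈ S, (y i - x i) ≤ ∑ j ∈ S, (y j - x j) * (∑ i ∈ S, R j i) := by
    calc ∑ i ∈ S, (y i - x i) ≤ ∑ i ∈ S, ∑ j, R j i * (y j - x j) :=
          Finset.sum_le_sum fun i _ => key i
      _ = ∑ j, ∑ i ∈ S, R j i * (y j - x j) := Finset.sum_comm
      _ = ∑ j, (y j - x j) * (∑ i ∈ S, R j i) := by
          apply Finset.sum_congr rfl; intro j _
          rw [Finset.mul_sum]; apply Finset.sum_congr rfl; intro i _; ring
      _ = ∑ j ∈ S, (y j - x j) * (∑ i ∈ S, R j i) := by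
          rw [← Finset.sum_subset (Finset.subset_univ S)]
          intro j _ hj; rw [hz0 j hj, zero_mul]
  have hstrict : ∑ j ∈ S, (y j - x j) * (∑ i ∈ S, R j i) < ∑ j ∈ S, (y j - x j) := by
    apply Finset.sum_lt_sum
    · intro j hj
      have hle : (∑ i ∈ S, R j i) ≤ 1 := by
        rw [← hrow j]
        exact Finset.sum_le_sum_of_subset_of_nonneg (Finset.subset_univ S)
          (fun i _ _ => hR j i)
      have hzj : 0 ≤ y j - x j := by linarith [hxy j]
      nlinarith
    · refine ⟨j0, hj0S, ?_⟩
      have hzj : 0 < y j0 - x j0 := by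
        have := (hmemS j0).mp hj0S; linarith
      nlinarith
  linarith
end

section
/- Call R out-connected if for every i there exist j and l ≥ 0 with Σₖ R_{jk} < 1 and (Rˡ)_{ij} > 0. If R is sub-stochastic and out-connected, then the equilibrium of ẋ = S₀ʷ(R'x + c) − x is unique: any two fixed points x = S₀ʷ(R'x + c), y = S₀ʷ(R'y + c) with x ≤ y must be equal. -/
open Matrix Finset

lemma stmt10_clamp_sub_le (a b v : ℝ) (h : b ≤ a) :
    max 0 (min a v) - max 0 (min b v) ≤ a - b := by
  simp only [max_def, min_def]
  split_ifs <;> linarith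

lemma stmt10_pow_nonneg {n : ℕ} (R : Matrix (Fin n) (Fin n) ℝ)
    (hR : ∀ i j, 0 ≤ R i j) (m : ℕ) : ∀ i j, 0 ≤ (R ^ m) i j := by
  induction m with
  | zero =>
      intro i j
      simp only [pow_zero, Matrix.one_apply]
      split_ifs <;> norm_num
  | succ m ih =>
      intro i j
      rw [pow_succ, Matrix.mul_apply]
      exact Finset.sum_nonneg fun k _ => mul_nonneg (ih i k) (hR k j)

lemma stmt10_pow_rowsum_le {n : ℕ} (R : Matrix (Fin n) (Fin n) ℝ)
    (hR : ∀ i j, 0 ≤ R i j) (hrow : ∀ i, ∑ j, R i j ≤ 1) (m : ℕ) :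
    ∀ i, ∑ j, (R ^ m) i j ≤ 1 := by
  induction m with
  | zero => intro i; simp [Matrix.one_apply]
  | succ m ih =>
      intro i
      calc ∑ j, (R ^ (m + 1)) i j = ∑ j, ∑ p, (R ^ m) i p * R p j := by
            simp [pow_succ, Matrix.mul_apply]
        _ = ∑ p, (R ^ m) i p * ∑ j, R p j := by
            rw [Finset.sum_comm]; simp [Finset.mul_sum]
        _ ≤ ∑ p, (R ^ m) i p * 1 := Finset.sum_le_sum fun p _ =>
            mul_le_mul_of_nonneg_left (hrow p) (stmt10_pow_nonneg R hR m i p)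
        _ ≤ 1 := by simpa using ih i

/-- If R is sub-stochastic and out-connected, then any two ordered fixed
points of T(x) = S₀ʷ(R'x + c) coincide: the equilibrium is unique. -/
theorem stmt10 {n : ℕ} (w c : Fin n → ℝ) (hw : ∀ i, 0 < w i)
    (R : Matrix (Fin n) (Fin n) ℝ) (hR : ∀ i j, 0 ≤ R i j)
    (hrow : ∀ i, ∑ j, R i j ≤ 1)
    (hout : ∀ i : Fin n, ∃ j : Fin n, ∃ l : ℕ,
      (∑ k, R j k < 1) ∧ 0 < (R ^ l) i j)
    (x y : Fin n → ℝ)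
    (hxfix : ∀ i, x i = max 0 (min ((Rᵀ.mulVec x) i + c i) (w i)))
    (hyfix : ∀ i, y i = max 0 (min ((Rᵀ.mulVec y) i + c i) (w i)))
    (hxy : ∀ i, x i ≤ y i) :
    x = y := by
  by_contra hne
  set z : Fin n → ℝ := fun i => y i - x i with hz
  have hz0 : ∀ i, 0 ≤ z i := fun i => sub_nonneg.mpr (hxy i)
  -- z ≤ Rᵀ z componентwise
  have hmulsub : ∀ i, Rᵀ.mulVec y i - Rᵀ.mulVec x i = Rᵀ.mulVec z i := by
    intro i
    simp only [Matrix.mulVec, dotProduct, hz]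
    rw [← Finset.sum_sub_distrib]
    exact Finset.sum_congr rfl fun j _ => by ring
  have hstep : ∀ i, z i ≤ Rᵀ.mulVec z i := by
    intro i
    have hle : Rᵀ.mulVec x i + c i ≤ Rᵀ.mulVec y i + c i := by
      have : Rᵀ.mulVec x i ≤ Rᵀ.mulVec y i := by
        simp only [Matrix.mulVec, dotProduct]
        exact Finset.sum_le_sum fun j _ =>
          mul_le_mul_of_nonneg_left (hxy j) (hR j i)
      linarith
    have h1 := stmt10_clamp_sub_le (Rᵀ.mulVec y i + c i) (Rᵀ.mulVec x i + c i) (w i) hle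
    have h2 := hmulsub i
    have hx := hxfix i
    have hy := hyfix i
    simp only [hz]
    linarith
  -- monotonicity of mulVec by a nonnegative matrix
  have hmono : ∀ (m : ℕ) (i : Fin n), z i ≤ ((R ^ m)ᵀ).mulVec z i := by
    intro m
    induction m with
    | zero => intro i; simp [Matrix.mulVec_one, Matrix.one_mulVec]
    | succ m ih =>
        intro i
        have step2 : Rᵀ.mulVec z i ≤ Rᵀ.mulVec (((R ^ m)ᵀ).mulVec z) i := by
          simp only [Matrix.mulVec, dotProduct]
          exact Finset.sum_le_sum fun j _ =>
            mul_le_mul_of_nonneg_left (ih j) (hR j i)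
        have comp : Rᵀ.mulVec (((R ^ m)ᵀ).mulVec z) = ((R ^ (m + 1))ᵀ).mulVec z := by
          rw [Matrix.mulVec_mulVec, ← Matrix.transpose_mul, pow_succ]
        calc z i ≤ Rᵀ.mulVec z i := hstep i
          _ ≤ Rᵀ.mulVec (((R ^ m)ᵀ).mulVec z) i := step2
          _ = ((R ^ (m + 1))ᵀ).mulVec z i := by rw [comp]
  -- find a coordinate where z > 0
  have hex : ∃ i, 0 < z i := by
    by_contra h
    push_neg at h
    apply hne
    funext i
    have := le_antisymm (h i) (hz0 i)
    simp only [hz] at this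
    linarith [sub_eq_zero.mp this]
  obtain ⟨i₀, hi₀⟩ := hex
  obtain ⟨j, l, hjrow, hjpos⟩ := hout i₀
  -- row sum of R^(l+1) at i₀ is strictly < 1
  have hstrict : ∑ k, (R ^ (l + 1)) i₀ k < 1 := by
    have e1 : ∑ k, (R ^ (l + 1)) i₀ k = ∑ p, (R ^ l) i₀ p * ∑ k, R p k := by
      calc ∑ k, (R ^ (l + 1)) i₀ k = ∑ k, ∑ p, (R ^ l) i₀ p * R p k := by
            simp [pow_succ, Matrix.mul_apply]
        _ = ∑ p, (R ^ l) i₀ p * ∑ k, R p k := by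
            rw [Finset.sum_comm]; simp [Finset.mul_sum]
    have e2 : ∑ p, (R ^ l) i₀ p * ∑ k, R p k < ∑ p, (R ^ l) i₀ p := by
      have hle' : ∀ p ∈ Finset.univ, (R ^ l) i₀ p * ∑ k, R p k ≤ (R ^ l) i₀ p := by
        intro p _
        have := mul_le_mul_of_nonneg_left (hrow p) (stmt10_pow_nonneg R hR l i₀ p)
        linarith [this]
      have hlt' : (R ^ l) i₀ j * ∑ k, R j k < (R ^ l) i₀ j := by
        have := mul_lt_mul_of_pos_left hjrow hjpos
        linarith [this]
      exact Finset.sum_lt_sum hle' ⟨j, Finset.mem_univ j, hlt'⟩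
    calc ∑ k, (R ^ (l + 1)) i₀ k = ∑ p, (R ^ l) i₀ p * ∑ k, R p k := e1
      _ < ∑ p, (R ^ l) i₀ p := e2
      _ ≤ 1 := stmt10_pow_rowsum_le R hR hrow l i₀
  -- sum contradiction
  set m := l + 1 with hm
  have hsum1 : ∑ i, z i ≤ ∑ i, ((R ^ m)ᵀ).mulVec z i :=
    Finset.sum_le_sum fun i _ => hmono m i
  have hsum2 : ∑ i, ((R ^ m)ᵀ).mulVec z i = ∑ p, z p * ∑ i, (R ^ m) p i := by
    simp only [Matrix.mulVec, dotProduct, Matrix.transpose_apply]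
    rw [Finset.sum_comm]
    simp only [Finset.mul_sum]
    exact Finset.sum_congr rfl fun p _ => Finset.sum_congr rfl fun i _ => mul_comm _ _
  have hsum3 : ∑ p, z p * ∑ i, (R ^ m) p i < ∑ p, z p := by
    have hle' : ∀ p ∈ Finset.univ, z p * ∑ i, (R ^ m) p i ≤ z p := by
      intro p _
      have := mul_le_mul_of_nonneg_left (stmt10_pow_rowsum_le R hR hrow m p) (hz0 p)
      linarith [this]
    have hlt' : z i₀ * ∑ i, (R ^ m) i₀ i < z i₀ := by
      have := mul_lt_mul_of_pos_left hstrict hi₀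
      linarith [this]
    exact Finset.sum_lt_sum hle' ⟨i₀, Finset.mem_univ i₀, hlt'⟩
  rw [hsum2] at hsum1
  linarith
end

section
/- If v ∈ ℝⁿ is a zero-sum vector and R is a stochastic irreducible matrix, then the series Hv = (1/2) Σ_{k≥0} ((I + R')/2)ᵏ v converges and its limit satisfies Hv = R'(Hv) + v. -/
/-!
The lazy chain `A = (1 + R) / 2` has a positive diagonal, so by the cut condition the set of
states reachable from `i` in `k` steps strictly grows until it is everything: `A` is primitive.
A power `Aᵐ` with all entries `≥ δ > 0` contracts the ℓ¹ norm of zero-sum vectors by the factor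
`1 - nδ < 1` (Dobrushin), so `(Aᵀ)ᵏ v` decays geometrically and the series converges. Shifting the
index gives `Aᵀ s + v = s` for its sum `s`, which for `Hv = s / 2` reads `Hv = Rᵀ Hv + v`.
-/

open Matrix Finset

theorem summable_of_apply_add_le_mul {f : ℕ → ℝ} {m : ℕ} {r : ℝ} (hm : 0 < m)
    (hf : 0 ≤ f) (hr₀ : 0 ≤ r) (hr₁ : r < 1) (h : ∀ k, f (k + m) ≤ r * f k) :
    Summable f := by
  have : NeZero m := ⟨hm.ne'⟩
  have hbound : ∀ q j, f (q * m + j) ≤ r ^ q * f j := by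
    intro q j
    induction q with
    | zero => simp
    | succ q ih =>
      calc f ((q + 1) * m + j) = f ((q * m + j) + m) := by ring_nf
        _ ≤ r * f (q * m + j) := h _
        _ ≤ r * (r ^ q * f j) := by gcongr
        _ = r ^ (q + 1) * f j := by ring
  rw [← (Nat.divModEquiv m).symm.summable_iff]
  refine Summable.of_nonneg_of_le (fun _ => hf _) (fun p => hbound p.1 p.2) ?_
  exact (summable_geometric_of_lt_one hr₀ hr₁).mul_of_nonneg
    (Summable.of_finite (f := fun j : Fin m => f j)) (fun _ => pow_nonneg hr₀ _) (fun _ => hf _)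

theorem Finset.min_succ_card_le_card_of_ssubset_succ {ι : Type*} [Fintype ι] {s : ℕ → Finset ι}
    (h₀ : (s 0).Nonempty) (hmono : ∀ k, s k ⊆ s (k + 1))
    (hgrow : ∀ k, s k ≠ univ → s k ⊂ s (k + 1)) (k : ℕ) :
    min (k + 1) (Fintype.card ι) ≤ #(s k) := by
  induction k with
  | zero => exact (min_le_left _ _).trans h₀.card_pos
  | succ k ih =>
    by_cases hk : s k = univ
    · rw [univ_subset_iff.1 (hk ▸ hmono k : univ ⊆ s (k + 1)), card_univ]
      exact min_le_right _ _
    · have := card_lt_card (hgrow k hk)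
      omega

namespace Matrix

variable {ι : Type*} [Fintype ι] [DecidableEq ι]

section Primitive

variable {R : Type*} [CommRing R] [LinearOrder R] {A : Matrix ι ι R}

theorem IsPrimitive.transpose (hA : A.IsPrimitive) : Aᵀ.IsPrimitive := by
  obtain ⟨hnonneg, k, hk, hpos⟩ := hA
  exact ⟨fun i j => hnonneg j i, k, hk, fun i j => by simpa [← transpose_pow] using hpos j i⟩

variable [IsStrictOrderedRing R]

theorem pow_succ_apply_pos (hA : ∀ i j, 0 ≤ A i j) {k : ℕ} {i l j : ι}
    (hil : 0 < (A ^ k) i l) (hlj : 0 < A l j) : 0 < (A ^ (k + 1)) i j := by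
  rw [pow_succ, mul_apply]
  exact sum_pos' (fun x _ => mul_nonneg (pow_apply_nonneg hA _ _ _) (hA _ _))
    ⟨l, mem_univ _, mul_pos hil hlj⟩

theorem isPrimitive_of_diag_pos (hA : ∀ i j, 0 ≤ A i j) (hdiag : ∀ i, 0 < A i i)
    (hcut : ∀ S : Finset ι, S.Nonempty → S ≠ univ → ∃ i ∈ S, ∃ j ∉ S, 0 < A i j) :
    A.IsPrimitive := by
  rcases isEmpty_or_nonempty ι with hι | hι
  · exact ⟨hA, 1, one_pos, fun i => isEmptyElim i⟩
  refine ⟨hA, Fintype.card ι, Fintype.card_pos, fun i j => ?_⟩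
  set s : ℕ → Finset ι := fun k => {j | 0 < (A ^ k) i j}
  have hmem : ∀ k j, j ∈ s k ↔ 0 < (A ^ k) i j := fun k j => by simp [s]
  have hmono : ∀ k, s k ⊆ s (k + 1) := fun k j hj =>
    (hmem _ _).2 (pow_succ_apply_pos hA ((hmem _ _).1 hj) (hdiag j))
  have h₀ : (s 0).Nonempty := ⟨i, (hmem _ _).2 (by simp)⟩
  have hgrow : ∀ k, s k ≠ univ → s k ⊂ s (k + 1) := by
    intro k hk
    obtain ⟨l, hl, j, hj, hlj⟩ :=
      hcut (s k) (h₀.mono (monotone_nat_of_le_succ hmono (Nat.zero_le k))) hk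
    exact ssubset_of_subset_of_ne (hmono k) fun h =>
      hj (h ▸ (hmem _ _).2 (pow_succ_apply_pos hA ((hmem _ _).1 hl) hlj))
  have hfull : s (Fintype.card ι) = univ := eq_univ_of_card _ <| le_antisymm (card_le_univ _) <|
    by simpa using min_succ_card_le_card_of_ssubset_succ h₀ hmono hgrow (Fintype.card ι)
  exact (hmem _ _).1 (hfull ▸ mem_univ j)

end Primitive

theorem exists_pos_of_sum_lt_one_of_mem_rowStochastic {R : Matrix ι ι ℝ}
    (hR : R ∈ rowStochastic ℝ ι) {S : Finset ι} {i : ι} (hS : ∑ j ∈ S, R i j < 1) :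
    ∃ j ∉ S, 0 < R i j := by
  have hsplit := sum_add_sum_compl S (R i)
  rw [sum_row_of_mem_rowStochastic hR i] at hsplit
  obtain ⟨j, hj, hpos⟩ := exists_lt_of_sum_lt (f := fun _ => (0 : ℝ)) (g := R i) (s := Sᶜ)
    (by rw [sum_const_zero]; linarith)
  exact ⟨j, mem_compl.1 hj, hpos⟩

theorem half_smul_one_add_mem_rowStochastic {R : Matrix ι ι ℝ} (hR : R ∈ rowStochastic ℝ ι) :
    (2⁻¹ : ℝ) • (1 + R) ∈ rowStochastic ℝ ι := by
  simpa only [smul_add, SetLike.mem_coe] using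
    convex_rowStochastic (one_mem _) hR (by norm_num) (by norm_num) (by norm_num)

theorem isPrimitive_half_smul_one_add {R : Matrix ι ι ℝ} (hR : R ∈ rowStochastic ℝ ι)
    (hcut : ∀ S : Finset ι, S.Nonempty → S ≠ univ → ∃ i ∈ S, ∑ j ∈ S, R i j < 1) :
    ((2⁻¹ : ℝ) • (1 + R)).IsPrimitive := by
  refine isPrimitive_of_diag_pos
    (fun i j => nonneg_of_mem_rowStochastic (half_smul_one_add_mem_rowStochastic hR))
    (fun i => ?_) fun S hS hSu => ?_
  · have := nonneg_of_mem_rowStochastic hR (i := i) (j := i)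
    rw [smul_apply, add_apply, one_apply_eq, smul_eq_mul]
    positivity
  · obtain ⟨i, hi, hsum⟩ := hcut S hS hSu
    obtain ⟨j, hj, hpos⟩ := exists_pos_of_sum_lt_one_of_mem_rowStochastic hR hsum
    refine ⟨i, hi, j, hj, ?_⟩
    rw [smul_apply, add_apply, one_apply_ne (ne_of_mem_of_not_mem hi hj), zero_add, smul_eq_mul]
    positivity

theorem sum_abs_mulVec_le_of_mem_colStochastic {M : Matrix ι ι ℝ} (hM : M ∈ colStochastic ℝ ι)
    {δ : ℝ} (hδ : ∀ i j, δ ≤ M i j) {w : ι → ℝ} (hw : ∑ j, w j = 0) :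
    ∑ i, |(M *ᵥ w) i| ≤ (1 - Fintype.card ι * δ) * ∑ j, |w j| :=
  -- since `∑ j, w j = 0`, subtracting `δ` from every entry of `M` does not change `M *ᵥ w`
  calc ∑ i, |(M *ᵥ w) i| = ∑ i, |∑ j, (M i j - δ) * w j| := by
        simp only [mulVec, dotProduct, sub_mul, sum_sub_distrib, ← mul_sum, hw, mul_zero,
          sub_zero]
    _ ≤ ∑ i, ∑ j, (M i j - δ) * |w j| := by
        gcongr with i
        refine (abs_sum_le_sum_abs _ _).trans_eq (sum_congr rfl fun j _ => ?_)
        rw [abs_mul, abs_of_nonneg (sub_nonneg.2 (hδ i j))]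
    _ = (1 - Fintype.card ι * δ) * ∑ j, |w j| := by
        rw [sum_comm, mul_sum]
        refine sum_congr rfl fun j _ => ?_
        rw [← sum_mul, sum_sub_distrib, sum_col_of_mem_colStochastic hM, sum_const, card_univ,
          nsmul_eq_mul]

theorem summable_pow_mulVec_of_isPrimitive {M : Matrix ι ι ℝ} (hM : M ∈ colStochastic ℝ ι)
    (hprim : M.IsPrimitive) {v : ι → ℝ} (hv : ∑ i, v i = 0) :
    Summable fun k => (M ^ k) *ᵥ v := by
  rcases isEmpty_or_nonempty ι with hι | hι
  · exact Pi.summable.2 fun i => isEmptyElim i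
  obtain ⟨-, m, hm, hpos⟩ := hprim
  obtain ⟨p, hp⟩ := Finite.exists_min fun p : ι × ι => (M ^ m) p.1 p.2
  set δ := (M ^ m) p.1 p.2
  have hMm : M ^ m ∈ colStochastic ℝ ι := pow_mem hM m
  have hδ₁ : Fintype.card ι * δ ≤ 1 := by
    simpa [sum_col_of_mem_colStochastic hMm] using
      card_nsmul_le_sum univ (fun i => (M ^ m) i p.2) δ fun i _ => hp (i, p.2)
  have hδ₀ : 0 < Fintype.card ι * δ := mul_pos (by exact_mod_cast Fintype.card_pos) (hpos _ _)
  set f : ℕ → ℝ := fun k => ∑ i, |((M ^ k) *ᵥ v) i|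
  have hcontr : ∀ k, f (k + m) ≤ (1 - Fintype.card ι * δ) * f k := fun k => by
    simpa only [f, add_comm k m, pow_add, ← mulVec_mulVec] using
      sum_abs_mulVec_le_of_mem_colStochastic hMm (fun i j => hp (i, j))
        ((sum_mulVec_of_mem_colStochastic (pow_mem hM k)).trans hv)
  have hf : Summable f := summable_of_apply_add_le_mul hm
    (fun k => sum_nonneg fun i _ => abs_nonneg _) (by linarith) (by linarith) hcontr
  exact Pi.summable.2 fun i => hf.of_norm_bounded fun k =>
    single_le_sum (f := fun i => |((M ^ k) *ᵥ v) i|) (fun j _ => abs_nonneg _) (mem_univ i)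

theorem mulVec_add_eq_of_hasSum_pow_mulVec {R : Type*} [CommRing R] [TopologicalSpace R]
    [IsTopologicalRing R] [T2Space R] {M : Matrix ι ι R} {v s : ι → R}
    (hs : HasSum (fun k => (M ^ k) *ᵥ v) s) : M *ᵥ s + v = s := by
  have hmul : HasSum (fun k => (M ^ (k + 1)) *ᵥ v) (M *ᵥ s) := by
    simpa [Function.comp_def, pow_succ', ← mulVec_mulVec] using
      hs.map (mulVecLin M) (continuous_const.matrix_mulVec continuous_id)
  have hshift : HasSum (fun k => (M ^ (k + 1)) *ᵥ v) (s - v) := by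
    simpa using (hasSum_nat_add_iff' 1).2 hs
  rw [hmul.unique hshift, sub_add_cancel]

end Matrix

/-- For a zero-sum v and stochastic irreducible R, the series
Hv = (1/2) Σ_{k≥0} ((I+R')/2)ᵏ v converges and its limit satisfies
Hv = R'(Hv) + v. -/
theorem stmt14 {n : ℕ} (R : Matrix (Fin n) (Fin n) ℝ)
    (hR : ∀ i j, 0 ≤ R i j) (hrow : ∀ i, ∑ j, R i j = 1)
    (hirr : ∀ S : Finset (Fin n), S.Nonempty → S ≠ Finset.univ →
      ∃ i ∈ S, ∑ j ∈ S, R i j < 1)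
    (v : Fin n → ℝ) (hv : ∑ i, v i = 0) :
    ∃ Hv : Fin n → ℝ,
      HasSum (fun k : ℕ =>
        (2⁻¹ : ℝ) • ((((2⁻¹ : ℝ) • (1 + Rᵀ)) ^ k).mulVec v)) Hv ∧
      Hv = Rᵀ.mulVec Hv + v := by
  have hRs : R ∈ rowStochastic ℝ (Fin n) := mem_rowStochastic_iff_sum.2 ⟨hR, hrow⟩
  have hQ : (2⁻¹ : ℝ) • (1 + Rᵀ) = ((2⁻¹ : ℝ) • (1 + R))ᵀ := by
    rw [transpose_smul, transpose_add, transpose_one]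
  obtain ⟨s, hs⟩ := summable_pow_mulVec_of_isPrimitive
    (transpose_mem_colStochastic_iff_mem_rowStochastic.2 (half_smul_one_add_mem_rowStochastic hRs))
    (isPrimitive_half_smul_one_add hRs hirr).transpose hv
  refine ⟨(2⁻¹ : ℝ) • s, by simpa only [hQ] using hs.const_smul (2⁻¹ : ℝ), ?_⟩
  have hfix := mulVec_add_eq_of_hasSum_pow_mulVec hs
  rw [← hQ, smul_mulVec, add_mulVec, one_mulVec] at hfix
  rw [mulVec_smul]
  funext i
  have := congrFun hfix i
  simp only [Pi.add_apply, Pi.smul_apply, smul_eq_mul] at this ⊢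
  linarith
end

section
/- Upper semicontinuity of the maximal fixed point: let c_m → c* in ℝⁿ with x̄(c_m) → z*. Then z* ≤ x̄(c*). In particular, limsup_{c→c*} x̄(c) = x̄(c*) (entrywise), and symmetrically liminf_{c→c*} x̲(c) = x̲(c*). -/
open Matrix Finset Filter

/-- Upper semicontinuity of the maximal fixed point: if c_m → c* and
x̄(c_m) → z*, then z* ≤ x̄(c*). -/
theorem stmt17 {n : ℕ} (w : Fin n → ℝ) (hw : ∀ i, 0 < w i)
    (R : Matrix (Fin n) (Fin n) ℝ) (hR : ∀ i j, 0 ≤ R i j)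
    (hrow : ∀ i, ∑ j, R i j ≤ 1)
    (xbar : (Fin n → ℝ) → (Fin n → ℝ))
    -- for every c, xbar c is the greatest fixed point of T_c in L₀ʷ
    (hL : ∀ c : Fin n → ℝ, ∀ i, 0 ≤ xbar c i ∧ xbar c i ≤ w i)
    (hfix : ∀ c : Fin n → ℝ, ∀ i,
      xbar c i = max 0 (min ((Rᵀ.mulVec (xbar c)) i + c i) (w i)))
    (hgreatest : ∀ c : Fin n → ℝ, ∀ y : Fin n → ℝ,
      (∀ i, 0 ≤ y i ∧ y i ≤ w i) →
      (∀ i, y i = max 0 (min ((Rᵀ.mulVec y) i + c i) (w i))) →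
      ∀ i, y i ≤ xbar c i)
    (cstar : Fin n → ℝ) (c : ℕ → Fin n → ℝ)
    (hc : Tendsto c atTop (nhds cstar))
    (zstar : Fin n → ℝ)
    (hz : Tendsto (fun m => xbar (c m)) atTop (nhds zstar)) :
    ∀ i, zstar i ≤ xbar cstar i := by
  have hzc : ∀ i, Tendsto (fun m => xbar (c m) i) atTop (nhds (zstar i)) := by
    intro i
    exact (continuous_apply i).continuousAt.tendsto.comp hz
  have hcc : ∀ i, Tendsto (fun m => c m i) atTop (nhds (cstar i)) := by
    intro i
    exact (continuous_apply i).continuousAt.tendsto.comp hc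
  -- z* ∈ L₀ʷ
  have hzL : ∀ i, 0 ≤ zstar i ∧ zstar i ≤ w i := by
    intro i
    constructor
    · exact le_of_tendsto_of_tendsto' tendsto_const_nhds (hzc i)
        (fun m => (hL (c m) i).1)
    · exact le_of_tendsto_of_tendsto' (hzc i) tendsto_const_nhds
        (fun m => (hL (c m) i).2)
  -- z* is a fixed point of T_{c*}
  have hzfix : ∀ i, zstar i = max 0 (min ((Rᵀ.mulVec zstar) i + cstar i) (w i)) := by
    intro i
    have hmul : Tendsto (fun m => (Rᵀ.mulVec (xbar (c m))) i) atTop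
        (nhds ((Rᵀ.mulVec zstar) i)) := by
      simp only [Matrix.mulVec, dotProduct]
      exact tendsto_finset_sum _ fun j _ =>
        (tendsto_const_nhds.mul (hzc j))
    have hrhs : Tendsto (fun m => max 0 (min ((Rᵀ.mulVec (xbar (c m))) i + c m i) (w i)))
        atTop (nhds (max 0 (min ((Rᵀ.mulVec zstar) i + cstar i) (w i)))) :=
      tendsto_const_nhds.max (((hmul.add (hcc i)).min tendsto_const_nhds))
    have : Tendsto (fun m => xbar (c m) i) atTop
        (nhds (max 0 (min ((Rᵀ.mulVec zstar) i + cstar i) (w i)))) := by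
      refine hrhs.congr fun m => ?_
      exact (hfix (c m) i).symm
    exact tendsto_nhds_unique (hzc i) this
  exact hgreatest cstar zstar hzL hzfix
end
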